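/- The commutator W^{(1)} := [W_{[2]}, E_1] of the cut-and-join operator with the raising operator E_1 = Σ_{n≥1} n·p_{n+1}·∂/∂p_n equals Σ_{k,l≥1} (k+l-1)·p_k·p_l·∂/∂p_{k+l-1} + Σ_{k,l≥1} k·l·p_{k+l+1}·∂²/(∂p_k ∂p_l), as operators on Λ. -/

import Mathlib

/-!
`E₁` is a derivation with `[∂_j, E₁] = (j - 1) ∂_{j-1}` and `E₁ p_a = a p_{a+1}`. Pushing `E₁`
through the cut part `Σ (a+b) p_a p_b ∂_{a+b}` and the join part `Σ ab p_{a+b} ∂_a ∂_b` of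
`2 W_{[2]}` with these two rules and reindexing `a ↦ a + 1` in the terms coming from `E₁ p_a`,
each summand becomes a multiple of the corresponding summand of the claimed operator, with
multipliers `(a+b) - (a-1) - (b-1) = 2` and `(a+1) + (b+1) - (a+b) = 2`.
A polynomial involves only finitely many `p_n`, so all sums may be truncated at a level `M`;
since the join part creates `p_{a+b}`, `M` has to exceed twice the largest index occurring in `f`.
-/

open MvPolynomial

/-- The cut-and-join operator `W₂`. -/
noncomputable def cutJoin (f : MvPolynomial ℕ ℂ) : MvPolynomial ℕ ℂ :=
  (2 : ℂ)⁻¹ •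
    (∑ᶠ (a : ℕ+) (b : ℕ+),
        (((a : ℕ) + (b : ℕ) : ℕ) : ℂ) •
          (X (a : ℕ) * X (b : ℕ) * pderiv ((a : ℕ) + (b : ℕ)) f)
     + ∑ᶠ (a : ℕ+) (b : ℕ+),
        (((a : ℕ) * (b : ℕ) : ℕ) : ℂ) •
          (X ((a : ℕ) + (b : ℕ)) * pderiv (a : ℕ) (pderiv (b : ℕ) f)))

/-- The raising operator `E₁ = Σ_{n≥1} n·p_{n+1}·∂/∂pₙ`. -/
noncomputable def ladderE1 (f : MvPolynomial ℕ ℂ) : MvPolynomial ℕ ℂ :=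
  ∑ᶠ m : ℕ+, (((m : ℕ) : ℂ)) • (X ((m : ℕ) + 1) * pderiv (m : ℕ) f)

open Finset

theorem MvPolynomial.pderiv_pderiv_comm {σ R : Type*} [CommRing R] (i j : σ)
    (f : MvPolynomial σ R) : pderiv i (pderiv j f) = pderiv j (pderiv i f) := by
  classical
  have h : ⁅pderiv i, pderiv j⁆ = (0 : Derivation R (MvPolynomial σ R) (MvPolynomial σ R)) :=
    derivation_ext fun k => by
      rw [Derivation.commutator_apply, pderiv_X, pderiv_X, Pi.single_apply, Pi.single_apply]
      split_ifs <;> simp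
  simpa [Derivation.commutator_apply, sub_eq_zero] using congr($h f)

theorem Finset.sum_Icc_one_succ_add {M : Type*} [AddCommMonoid M] (h : ℕ → M) :
    ∀ K, ∑ i ∈ Icc 1 K, h (i + 1) + h 1 = ∑ i ∈ Icc 1 K, h i + h (K + 1)
  | 0 => by simp
  | K + 1 => by
    rw [sum_Icc_succ_top (by omega), sum_Icc_succ_top (by omega), add_right_comm,
      sum_Icc_one_succ_add h K, add_assoc]

theorem Finset.sum_Icc_one_succ_of_eq_zero {M : Type*} [AddCommMonoid M] {h : ℕ → M} (K : ℕ)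
    (h1 : h 1 = 0) (hK : h (K + 1) = 0) : ∑ i ∈ Icc 1 K, h (i + 1) = ∑ i ∈ Icc 1 K, h i := by
  simpa [h1, hK] using sum_Icc_one_succ_add h K

theorem sum_Icc_eq_finsum_pnat {M : Type*} [AddCommMonoid M] {h : ℕ → M} {K : ℕ}
    (hh : ∀ n > K, h n = 0) : ∑ n ∈ Icc 1 K, h n = ∑ᶠ a : ℕ+, h a := by
  rw [← finsum_comp_equiv Equiv.pnatEquivNat.symm, finsum_eq_sum_of_support_subset (s := range K)]
  · rw [range_eq_Ico, ← Ico_add_one_right_eq_Icc]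
    exact (sum_Ico_add' h 0 K 1).symm
  intro n hn
  by_contra h'
  exact hn (hh _ (by simp at h' ⊢; omega))

theorem sum_Icc_eq_finsum_pnat_pnat {M : Type*} [AddCommMonoid M] {F : ℕ → ℕ → M} {K : ℕ}
    (hF : ∀ a b, K < a ∨ K < b → F a b = 0) :
    ∑ a ∈ Icc 1 K, ∑ b ∈ Icc 1 K, F a b = ∑ᶠ (a : ℕ+) (b : ℕ+), F a b := by
  rw [finsum_congr fun a : ℕ+ => (sum_Icc_eq_finsum_pnat fun b hb => hF a b (Or.inr hb)).symm]
  exact sum_Icc_eq_finsum_pnat fun a ha => sum_eq_zero fun b _ => hF a b (Or.inl ha)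

section Truncated

variable {R : Type*} [CommRing R]

theorem exists_forall_pderiv_eq_zero (f : MvPolynomial ℕ R) : ∃ N, ∀ n > N, pderiv n f = 0 :=
  ⟨f.vars.sup id, fun _ hn => pderiv_eq_zero_of_notMem_vars fun h => (le_sup (f := id) h).not_gt hn⟩

theorem pderiv_pderiv_eq_zero_of_lt {N a b : ℕ} {g : MvPolynomial ℕ R}
    (hg : ∀ n > N, pderiv n g = 0) (h : N < a ∨ N < b) : pderiv a (pderiv b g) = 0 := by
  rcases h with h | h
  · rw [pderiv_pderiv_comm, hg a h, map_zero]
  · rw [hg b h, map_zero]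

noncomputable def ladderDeriv (M : ℕ) : Derivation R (MvPolynomial ℕ R) (MvPolynomial ℕ R) :=
  ∑ m ∈ Icc 1 M, (m : R) • (X (m + 1) : MvPolynomial ℕ R) • pderiv m

noncomputable def cutSum (M : ℕ) (g : MvPolynomial ℕ R) : MvPolynomial ℕ R :=
  ∑ a ∈ Icc 1 M, ∑ b ∈ Icc 1 M, ((a + b : ℕ) : R) • (X a * X b * pderiv (a + b) g)

noncomputable def joinSum (M : ℕ) (g : MvPolynomial ℕ R) : MvPolynomial ℕ R :=
  ∑ a ∈ Icc 1 M, ∑ b ∈ Icc 1 M, ((a * b : ℕ) : R) • (X (a + b) * pderiv a (pderiv b g))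

theorem ladderDeriv_apply (M : ℕ) (g : MvPolynomial ℕ R) :
    ladderDeriv M g = ∑ m ∈ Icc 1 M, (m : R) • (X (m + 1) * pderiv m g) := by
  rw [ladderDeriv, ← Derivation.coeFnAddMonoidHom_apply, map_sum, Finset.sum_apply]
  rfl

theorem ladderDeriv_X {M a : ℕ} (ha : a ≤ M) :
    ladderDeriv M (X a : MvPolynomial ℕ R) = (a : R) • X (a + 1) := by
  classical
  rw [ladderDeriv_apply]
  simp only [pderiv_X, Pi.single_apply, mul_ite, mul_one, mul_zero, smul_ite, smul_zero]
  rw [sum_ite_eq]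
  split_ifs with h
  · rfl
  · simp [show a = 0 by simp at h; omega]

-- Truncated subtraction makes this hold for `j = 0` as well.
theorem pderiv_ladderDeriv {M : ℕ} {g : MvPolynomial ℕ R} (hg : ∀ n > M, pderiv n g = 0)
    (j : ℕ) :
    pderiv j (ladderDeriv M g) =
      ladderDeriv M (pderiv j g) + ((j - 1 : ℕ) : R) • pderiv (j - 1) g := by
  classical
  have hterm : ∀ m : ℕ, pderiv j ((m : R) • (X (m + 1) * pderiv m g)) =
      (m : R) • (X (m + 1) * pderiv m (pderiv j g)) +
        if m + 1 = j then (m : R) • pderiv m g else 0 := by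
    intro m
    rw [Derivation.map_smul, pderiv_mul, pderiv_X, Pi.single_apply, pderiv_pderiv_comm]
    split_ifs <;> simp [smul_add, add_comm]
  simp only [ladderDeriv_apply, map_sum, hterm, sum_add_distrib]
  congr 1
  by_cases hj : j - 1 ∈ Icc 1 M
  · rw [mem_Icc] at hj
    rw [sum_eq_single_of_mem (j - 1) (mem_Icc.2 hj) fun m _ hm => if_neg (by omega),
      if_pos (by omega)]
  · rw [mem_Icc, not_and_or, not_le, not_le, Nat.lt_one_iff] at hj
    rw [sum_eq_zero fun m hm => if_neg (by rw [mem_Icc] at hm; omega)]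
    rcases hj with hj | hj
    · simp [hj]
    · simp [hg _ hj]

theorem pderiv_ladderDeriv_eq_zero {N M : ℕ} {g : MvPolynomial ℕ R}
    (hg : ∀ n > N, pderiv n g = 0) (hNM : N ≤ M) :
    ∀ n > N + 1, pderiv n (ladderDeriv M g) = 0 := fun n hn => by
  rw [pderiv_ladderDeriv fun k hk => hg k (by omega), hg n (by omega), hg (n - 1) (by omega),
    map_zero, smul_zero, add_zero]

theorem pderiv_cutSum_eq_zero {N : ℕ} (M : ℕ) {g : MvPolynomial ℕ R}
    (hg : ∀ n > N, pderiv n g = 0) : ∀ n > N, pderiv n (cutSum M g) = 0 := fun n hn => by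
  simp only [cutSum, map_sum]
  refine sum_eq_zero fun a _ => sum_eq_zero fun b _ => ?_
  by_cases hab : a + b ≤ N
  · rw [Derivation.map_smul, pderiv_mul, pderiv_mul, pderiv_X_of_ne (by omega),
      pderiv_X_of_ne (by omega), pderiv_pderiv_comm, hg n hn]
    simp
  · simp [hg (a + b) (by omega)]

theorem pderiv_joinSum_eq_zero {N : ℕ} (M : ℕ) {g : MvPolynomial ℕ R}
    (hg : ∀ n > N, pderiv n g = 0) : ∀ n > 2 * N, pderiv n (joinSum M g) = 0 := fun n hn => by
  simp only [joinSum, map_sum]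
  refine sum_eq_zero fun a _ => sum_eq_zero fun b _ => ?_
  by_cases hab : a ≤ N ∧ b ≤ N
  · rw [Derivation.map_smul, pderiv_mul, pderiv_X_of_ne (by omega),
      pderiv_pderiv_eq_zero_of_lt (fun k hk => pderiv_pderiv_eq_zero_of_lt hg (Or.inl hk))
        (Or.inl (by omega))]
    simp
  · rw [pderiv_pderiv_eq_zero_of_lt (a := a) (b := b) hg (by omega)]
    simp

theorem cutSum_term_ladderDeriv_sub {M a b : ℕ} {g : MvPolynomial ℕ R}
    (hg : ∀ n > M, pderiv n g = 0) (ha : a ≤ M) (hb : b ≤ M) :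
    ((a + b : ℕ) : R) • (X a * X b * pderiv (a + b) (ladderDeriv M g)) -
        ladderDeriv M (((a + b : ℕ) : R) • (X a * X b * pderiv (a + b) g)) =
      (((a + b : ℕ) : R) * ((a + b - 1 : ℕ) : R)) • (X a * X b * pderiv (a + b - 1) g) -
        (((a + b : ℕ) : R) * a) • (X (a + 1) * X b * pderiv (a + b) g) -
        (((a + b : ℕ) : R) * b) • (X a * X (b + 1) * pderiv (a + b) g) := by
  rw [pderiv_ladderDeriv hg, Derivation.map_smul, Derivation.leibniz, Derivation.leibniz,
    ladderDeriv_X ha, ladderDeriv_X hb]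
  simp only [smul_eq_mul, smul_eq_C_mul, map_mul, map_natCast]
  ring

theorem cutSum_ladderDeriv_sub {M : ℕ} {g : MvPolynomial ℕ R} (hg : ∀ n > M, pderiv n g = 0) :
    cutSum M (ladderDeriv M g) - ladderDeriv M (cutSum M g) =
      (2 : R) • ∑ a ∈ Icc 1 M, ∑ b ∈ Icc 1 M,
        ((a + b - 1 : ℕ) : R) • (X a * X b * pderiv (a + b - 1) g) := by
  have hshift_a : ∑ a ∈ Icc 1 M, ∑ b ∈ Icc 1 M,
        (((a + b : ℕ) : R) * a) • (X (a + 1) * X b * pderiv (a + b) g) =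
      ∑ a ∈ Icc 1 M, ∑ b ∈ Icc 1 M,
        (((a - 1 : ℕ) : R) * ((a + b - 1 : ℕ) : R)) • (X a * X b * pderiv (a + b - 1) g) := by
    symm
    rw [← sum_Icc_one_succ_of_eq_zero M (by simp) (sum_eq_zero fun b hb => by
      rw [hg _ (by simp at hb; omega), mul_zero, smul_zero])]
    refine sum_congr rfl fun a _ => sum_congr rfl fun b _ => ?_
    rw [Nat.add_sub_cancel, show a + 1 + b - 1 = a + b by omega, mul_comm]
  have hshift_b : ∑ a ∈ Icc 1 M, ∑ b ∈ Icc 1 M,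
        (((a + b : ℕ) : R) * b) • (X a * X (b + 1) * pderiv (a + b) g) =
      ∑ a ∈ Icc 1 M, ∑ b ∈ Icc 1 M,
        (((b - 1 : ℕ) : R) * ((a + b - 1 : ℕ) : R)) • (X a * X b * pderiv (a + b - 1) g) := by
    refine sum_congr rfl fun a ha => ?_
    rw [mem_Icc] at ha
    symm
    rw [← sum_Icc_one_succ_of_eq_zero M (by simp) (by
      rw [hg (a + (M + 1) - 1) (by omega), mul_zero, smul_zero])]
    refine sum_congr rfl fun b _ => ?_
    rw [Nat.add_sub_cancel, show a + (b + 1) - 1 = a + b by omega, mul_comm]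
  simp only [cutSum, map_sum, ← sum_sub_distrib]
  rw [sum_congr rfl fun a ha => sum_congr rfl fun b hb =>
    cutSum_term_ladderDeriv_sub hg (mem_Icc.1 ha).2 (mem_Icc.1 hb).2]
  simp only [sum_sub_distrib, hshift_a, hshift_b]
  simp only [← sum_sub_distrib, smul_sum, smul_smul, ← sub_smul]
  refine sum_congr rfl fun a ha => sum_congr rfl fun b hb => ?_
  rw [mem_Icc] at ha hb
  congr 1
  rw [Nat.cast_sub (by omega : 1 ≤ a + b), Nat.cast_sub ha.1, Nat.cast_sub hb.1]
  push_cast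
  ring

theorem joinSum_term_ladderDeriv_sub {N M a b : ℕ} {g : MvPolynomial ℕ R}
    (hg : ∀ n > N, pderiv n g = 0) (hNM : 2 * N < M) :
    ((a * b : ℕ) : R) • (X (a + b) * pderiv a (pderiv b (ladderDeriv M g))) -
        ladderDeriv M (((a * b : ℕ) : R) • (X (a + b) * pderiv a (pderiv b g))) =
      (((a * b : ℕ) : R) * ((a - 1 : ℕ) : R)) • (X (a + b) * pderiv (a - 1) (pderiv b g)) +
        (((a * b : ℕ) : R) * ((b - 1 : ℕ) : R)) • (X (a + b) * pderiv a (pderiv (b - 1) g)) -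
        (((a * b : ℕ) : R) * ((a + b : ℕ) : R)) • (X (a + b + 1) * pderiv a (pderiv b g)) := by
  have hgM : ∀ n > M, pderiv n g = 0 := fun n hn => hg n (by omega)
  have hX : pderiv a (pderiv b g) * ladderDeriv M (X (a + b)) =
      ((a + b : ℕ) : R) • (X (a + b + 1) * pderiv a (pderiv b g)) := by
    by_cases hab : a + b ≤ M
    · rw [ladderDeriv_X hab, mul_smul_comm, mul_comm]
    · rw [pderiv_pderiv_eq_zero_of_lt hg (by omega), zero_mul, mul_zero, smul_zero]
  rw [pderiv_ladderDeriv hgM, map_add,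
    pderiv_ladderDeriv fun n hn => pderiv_pderiv_eq_zero_of_lt hgM (Or.inl hn),
    Derivation.map_smul, Derivation.map_smul, Derivation.leibniz, smul_eq_mul, smul_eq_mul, hX]
  simp only [smul_eq_C_mul, map_mul, map_natCast]
  ring

theorem joinSum_ladderDeriv_sub {N M : ℕ} {g : MvPolynomial ℕ R}
    (hg : ∀ n > N, pderiv n g = 0) (hNM : 2 * N < M) :
    joinSum M (ladderDeriv M g) - ladderDeriv M (joinSum M g) =
      (2 : R) • ∑ a ∈ Icc 1 M, ∑ b ∈ Icc 1 M,
        ((a * b : ℕ) : R) • (X (a + b + 1) * pderiv a (pderiv b g)) := by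
  have hshift_a : ∑ a ∈ Icc 1 M, ∑ b ∈ Icc 1 M,
        (((a * b : ℕ) : R) * ((a - 1 : ℕ) : R)) • (X (a + b) * pderiv (a - 1) (pderiv b g)) =
      ∑ a ∈ Icc 1 M, ∑ b ∈ Icc 1 M,
        ((((a + 1) * b : ℕ) : R) * a) • (X (a + b + 1) * pderiv a (pderiv b g)) := by
    rw [← sum_Icc_one_succ_of_eq_zero M (by simp) (sum_eq_zero fun b _ => by
      rw [Nat.add_sub_cancel, pderiv_pderiv_eq_zero_of_lt hg (Or.inl (by omega)), mul_zero,
        smul_zero])]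
    refine sum_congr rfl fun a _ => sum_congr rfl fun b _ => ?_
    rw [Nat.add_sub_cancel, add_right_comm]
  have hshift_b : ∑ a ∈ Icc 1 M, ∑ b ∈ Icc 1 M,
        (((a * b : ℕ) : R) * ((b - 1 : ℕ) : R)) • (X (a + b) * pderiv a (pderiv (b - 1) g)) =
      ∑ a ∈ Icc 1 M, ∑ b ∈ Icc 1 M,
        (((a * (b + 1) : ℕ) : R) * b) • (X (a + b + 1) * pderiv a (pderiv b g)) := by
    refine sum_congr rfl fun a _ => ?_
    rw [← sum_Icc_one_succ_of_eq_zero M (by simp) (by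
      rw [Nat.add_sub_cancel, pderiv_pderiv_eq_zero_of_lt hg (Or.inr (by omega)), mul_zero,
        smul_zero])]
    refine sum_congr rfl fun b _ => ?_
    rw [Nat.add_sub_cancel, ← add_assoc]
  simp only [joinSum, map_sum, ← sum_sub_distrib, joinSum_term_ladderDeriv_sub hg hNM]
  simp only [sum_sub_distrib, sum_add_distrib, hshift_a, hshift_b]
  simp only [← sum_add_distrib, ← sum_sub_distrib, smul_sum, smul_smul, ← add_smul, ← sub_smul]
  refine sum_congr rfl fun a _ => sum_congr rfl fun b _ => ?_
  congr 1
  push_cast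
  ring

end Truncated

theorem ladderE1_eq_ladderDeriv {M : ℕ} {g : MvPolynomial ℕ ℂ} (hg : ∀ n > M, pderiv n g = 0) :
    ladderE1 g = ladderDeriv M g := by
  rw [ladderE1, ladderDeriv_apply]
  symm
  exact sum_Icc_eq_finsum_pnat fun n hn => by rw [hg n hn, mul_zero, smul_zero]

theorem cutJoin_eq_cutSum_add_joinSum {M : ℕ} {g : MvPolynomial ℕ ℂ}
    (hg : ∀ n > M, pderiv n g = 0) : cutJoin g = (2 : ℂ)⁻¹ • (cutSum M g + joinSum M g) := by
  rw [cutJoin, cutSum, joinSum]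
  symm
  congr 2
  · exact sum_Icc_eq_finsum_pnat_pnat fun a b h => by
      rw [hg (a + b) (by omega), mul_zero, smul_zero]
  · exact sum_Icc_eq_finsum_pnat_pnat fun a b h => by
      rw [pderiv_pderiv_eq_zero_of_lt hg h, mul_zero, smul_zero]

/-- `W⁽¹⁾ := [W₂, E₁] = Σ_{k,l≥1} (k+l−1)·p_k p_l ∂_{p_{k+l−1}}
 + Σ_{k,l≥1} k·l·p_{k+l+1} ∂_{p_k}∂_{p_l}` as operators on `Λ`. -/
theorem comm_cutJoin_ladder (f : MvPolynomial ℕ ℂ) :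
    cutJoin (ladderE1 f) - ladderE1 (cutJoin f)
      = (∑ᶠ (k : ℕ+) (l : ℕ+),
          (((k : ℕ) + (l : ℕ) - 1 : ℕ) : ℂ) •
            (X (k : ℕ) * X (l : ℕ) * pderiv ((k : ℕ) + (l : ℕ) - 1) f))
        + ∑ᶠ (k : ℕ+) (l : ℕ+),
          (((k : ℕ) * (l : ℕ) : ℕ) : ℂ) •
            (X ((k : ℕ) + (l : ℕ) + 1) * pderiv (k : ℕ) (pderiv (l : ℕ) f)) := by
  obtain ⟨N, hN⟩ := exists_forall_pderiv_eq_zero f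
  set M := 2 * N + 1
  have hfM : ∀ n > M, pderiv n f = 0 := fun n hn => hN n (by omega)
  have hEf : ∀ n > M, pderiv n (ladderDeriv M f) = 0 :=
    fun n hn => pderiv_ladderDeriv_eq_zero hN (by omega) n (by omega)
  have hWf : ∀ n > M, pderiv n ((2 : ℂ)⁻¹ • (cutSum M f + joinSum M f)) = 0 := fun n hn => by
    rw [Derivation.map_smul, map_add, pderiv_cutSum_eq_zero M hN n (by omega),
      pderiv_joinSum_eq_zero M hN n (by omega), add_zero, smul_zero]
  calc cutJoin (ladderE1 f) - ladderE1 (cutJoin f)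
      = (∑ k ∈ Icc 1 M, ∑ l ∈ Icc 1 M,
          ((k + l - 1 : ℕ) : ℂ) • (X k * X l * pderiv (k + l - 1) f)) +
        (∑ k ∈ Icc 1 M, ∑ l ∈ Icc 1 M,
          ((k * l : ℕ) : ℂ) • (X (k + l + 1) * pderiv k (pderiv l f))) := by
        rw [ladderE1_eq_ladderDeriv hfM, cutJoin_eq_cutSum_add_joinSum hfM,
          cutJoin_eq_cutSum_add_joinSum hEf, ladderE1_eq_ladderDeriv hWf, Derivation.map_smul,
          map_add]
        linear_combination (norm := module) (2 : ℂ)⁻¹ •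
          (cutSum_ladderDeriv_sub hfM + joinSum_ladderDeriv_sub (M := M) hN (by omega))
    _ = _ := by
        congr 1
        · exact sum_Icc_eq_finsum_pnat_pnat fun k l h => by
            rw [hN (k + l - 1) (by omega), mul_zero, smul_zero]
        · exact sum_Icc_eq_finsum_pnat_pnat fun k l h => by
            rw [pderiv_pderiv_eq_zero_of_lt hN (by omega), mul_zero, smul_zero]
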